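/- Let M be an orientable hypersurface of S²×S² with C = ⟨PN,N⟩ constantly equal to c₀ ∈ (-1,1). Then AX = 0 where X = PN - c₀N (so 0 is a principal curvature at every point), and in the orthonormal frame E₁ = X/√(1-c₀²), E₂ = (J₁N+J₂N)/√(2(1+c₀)), E₃ = (J₁N-J₂N)/√(2(1-c₀)), the tangential product structure is Pᵀ = diag(-c₀, 1, -1). -/

import Mathlib

/-!
Write `Φ = (φ, ψ)` and `N = (N₁, N₂)`. From `|N₁|² + |N₂|² = 1` and `|N₁|² - |N₂|² = c₀`, both
`|N₁|²` and `|N₂|²` are constant; differentiating `|N₁|²` and inserting the Weingarten formula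
gives `dφ(AV) ⟂ N₁`, and then `⟨N, dΦ(AV)⟩ = 0` gives `dψ(AV) ⟂ N₂`. Differentiating
`⟨N, dΦ(V)⟩ = 0` and using the symmetry of `d²Φ` shows that `(U, V) ↦ ⟨dN(U), dΦ(V)⟩` is
symmetric. Since `dΦ(X) = ((1 - c₀)N₁, -(1 + c₀)N₂)`, taking `U = X`, `V = AX` yields
`|dΦ(AX)|² = ⟨dΦ(A²X), dΦ(X)⟩ = 0`. The entries of `Pᵀ` in the frame are pointwise algebra,
using `|a × b|² = |a|²|b|² - ⟨a, b⟩²`.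
-/

open Matrix

/-- Points of the (local) hypersurface are parametrized by a chart with values in `ℝ³`. -/
abbrev V3 := Fin 3 → ℝ

/-- Directional derivative of an `ℝ³`-valued map. -/
noncomputable def Dv (f : V3 → V3) (x v : V3) : V3 := fderiv ℝ f x v

section

variable (c₀ : ℝ) (φ ψ N1 N2 : V3 → V3)

/-- First/second components of `E₁ = X/√(1-c₀²)` (ambient representation:
`X = PN - c₀N = ((1-c₀)N₁, -(1+c₀)N₂)`). -/
noncomputable def E1a (x : V3) : V3 := (Real.sqrt (1 - c₀ ^ 2))⁻¹ • ((1 - c₀) • N1 x)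
noncomputable def E1b (x : V3) : V3 := (Real.sqrt (1 - c₀ ^ 2))⁻¹ • (-((1 + c₀) • N2 x))

/-- `E₂ = (J₁N + J₂N)/√(2(1+c₀)) = (2(φ×N₁), 0)/√(2(1+c₀))`. -/
noncomputable def E2a (x : V3) : V3 :=
  (Real.sqrt (2 * (1 + c₀)))⁻¹ • ((2 : ℝ) • crossProduct (φ x) (N1 x))

/-- `E₃ = (J₁N - J₂N)/√(2(1-c₀)) = (0, 2(ψ×N₂))/√(2(1-c₀))`. -/
noncomputable def E3b (x : V3) : V3 :=
  (Real.sqrt (2 * (1 - c₀)))⁻¹ • ((2 : ℝ) • crossProduct (ψ x) (N2 x))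

section Hypersurface

variable {E : Type*} [NormedAddCommGroup E] [NormedSpace ℝ E] {ι : Type*} [Fintype ι]

theorem HasFDerivAt.dotProduct {f g : E → ι → ℝ} {f' g' : E →L[ℝ] ι → ℝ} {x : E}
    (hf : HasFDerivAt f f' x) (hg : HasFDerivAt g g' x) :
    HasFDerivAt (fun y => f y ⬝ᵥ g y)
      (∑ i, (f x i • (ContinuousLinearMap.proj i).comp g'
        + g x i • (ContinuousLinearMap.proj i).comp f')) x := by
  have hcoord : ∀ i, HasFDerivAt (fun y => f y i * g y i)
      (f x i • (ContinuousLinearMap.proj i).comp g'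
        + g x i • (ContinuousLinearMap.proj i).comp f') x := fun i => by
    simpa [Function.comp_def, Pi.mul_def] using
      ((ContinuousLinearMap.proj i).hasFDerivAt.comp x hf).mul
        ((ContinuousLinearMap.proj i).hasFDerivAt.comp x hg)
  exact HasFDerivAt.fun_sum fun i _ => hcoord i

theorem DifferentiableAt.dotProduct {f g : E → ι → ℝ} {x : E}
    (hf : DifferentiableAt ℝ f x) (hg : DifferentiableAt ℝ g x) :
    DifferentiableAt ℝ (fun y => f y ⬝ᵥ g y) x :=
  (hf.hasFDerivAt.dotProduct hg.hasFDerivAt).differentiableAt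

theorem fderiv_dotProduct_apply {f g : E → ι → ℝ} {x : E}
    (hf : DifferentiableAt ℝ f x) (hg : DifferentiableAt ℝ g x) (v : E) :
    fderiv ℝ (fun y => f y ⬝ᵥ g y) x v = fderiv ℝ f x v ⬝ᵥ g x + f x ⬝ᵥ fderiv ℝ g x v := by
  rw [(hf.hasFDerivAt.dotProduct hg.hasFDerivAt).fderiv]
  simp [dotProduct, Finset.sum_add_distrib, mul_comm, add_comm]

theorem dotProduct_fderiv_eq_zero_of_dotProduct_self_eq {f : E → ι → ℝ} {x : E} {c : ℝ}
    (hf : DifferentiableAt ℝ f x) (h : ∀ y, f y ⬝ᵥ f y = c) (v : E) :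
    f x ⬝ᵥ fderiv ℝ f x v = 0 := by
  have hv := fderiv_dotProduct_apply hf hf v
  simp [h, dotProduct_comm (fderiv ℝ f x v)] at hv
  linarith

theorem ContDiffAt.differentiableAt_fderiv_apply {F : Type*} [NormedAddCommGroup F]
    [NormedSpace ℝ F] {f : E → F} {x : E} (hf : ContDiffAt ℝ 2 f x) (w : E) :
    DifferentiableAt ℝ (fun y => fderiv ℝ f y w) x :=
  ((hf.fderiv_right (m := 1) le_rfl).differentiableAt one_ne_zero).clm_apply
    (differentiableAt_const w)

theorem fderiv_fderiv_apply_comm {F : Type*} [NormedAddCommGroup F] [NormedSpace ℝ F]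
    {f : E → F} {x : E} (hf : ContDiffAt ℝ 2 f x) (u v : E) :
    fderiv ℝ (fun y => fderiv ℝ f y v) x u = fderiv ℝ (fun y => fderiv ℝ f y u) x v := by
  have hdf : DifferentiableAt ℝ (fderiv ℝ f) x :=
    (hf.fderiv_right (m := 1) le_rfl).differentiableAt one_ne_zero
  simp only [fderiv_clm_apply hdf (differentiableAt_const _)]
  simpa using hf.isSymmSndFDerivAt (by simp) u v

theorem fderiv_dotProduct_fderiv_apply_sub_swap {N f : E → ι → ℝ} {x : E}
    (hN : DifferentiableAt ℝ N x) (hf : ContDiffAt ℝ 2 f x) (u v : E) :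
    fderiv ℝ (fun y => N y ⬝ᵥ fderiv ℝ f y v) x u
        - fderiv ℝ (fun y => N y ⬝ᵥ fderiv ℝ f y u) x v
      = fderiv ℝ N x u ⬝ᵥ fderiv ℝ f x v - fderiv ℝ N x v ⬝ᵥ fderiv ℝ f x u := by
  rw [fderiv_dotProduct_apply hN (hf.differentiableAt_fderiv_apply v),
    fderiv_dotProduct_apply hN (hf.differentiableAt_fderiv_apply u),
    fderiv_fderiv_apply_comm hf u v]
  ring

theorem fderiv_dotProduct_fderiv_add_comm {N₁ N₂ f₁ f₂ : E → ι → ℝ} {x : E}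
    (hN₁ : DifferentiableAt ℝ N₁ x) (hN₂ : DifferentiableAt ℝ N₂ x)
    (hf₁ : ContDiffAt ℝ 2 f₁ x) (hf₂ : ContDiffAt ℝ 2 f₂ x)
    (hnormal : ∀ y v, N₁ y ⬝ᵥ fderiv ℝ f₁ y v + N₂ y ⬝ᵥ fderiv ℝ f₂ y v = 0) (u v : E) :
    fderiv ℝ N₁ x u ⬝ᵥ fderiv ℝ f₁ x v + fderiv ℝ N₂ x u ⬝ᵥ fderiv ℝ f₂ x v
      = fderiv ℝ N₁ x v ⬝ᵥ fderiv ℝ f₁ x u + fderiv ℝ N₂ x v ⬝ᵥ fderiv ℝ f₂ x u := by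
  have hconst : ∀ w u, fderiv ℝ (fun y => N₁ y ⬝ᵥ fderiv ℝ f₁ y w) x u
      + fderiv ℝ (fun y => N₂ y ⬝ᵥ fderiv ℝ f₂ y w) x u = 0 := fun w u => by
    rw [← _root_.add_apply, ← fderiv_fun_add
      (hN₁.dotProduct (hf₁.differentiableAt_fderiv_apply w))
      (hN₂.dotProduct (hf₂.differentiableAt_fderiv_apply w))]
    simp [hnormal]
  linarith [hconst u v, hconst v u, fderiv_dotProduct_fderiv_apply_sub_swap hN₁ hf₁ u v,
    fderiv_dotProduct_fderiv_apply_sub_swap hN₂ hf₂ u v]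

theorem dotProduct_eq_neg_of_add_smul_eq_neg {a b p t : ι → ℝ} {s : ℝ}
    (h : a + s • p = -b) (hp : p ⬝ᵥ t = 0) : a ⬝ᵥ t = -(b ⬝ᵥ t) := by
  have ht := congrArg (· ⬝ᵥ t) h
  simpa [add_dotProduct, hp] using ht

theorem fderiv_apply_shapeOperator_eq_zero {φ ψ N₁ N₂ : E → ι → ℝ} {x ξ : E} (A : E →ₗ[ℝ] E)
    {r a b : ℝ} (hφ : ContDiffAt ℝ 2 φ x) (hψ : ContDiffAt ℝ 2 ψ x)
    (hN₁ : DifferentiableAt ℝ N₁ x) (hN₂ : DifferentiableAt ℝ N₂ x)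
    (hφ1 : ∀ y, φ y ⬝ᵥ φ y = 1) (hψ1 : ∀ y, ψ y ⬝ᵥ ψ y = 1)
    (hN₁r : ∀ y, N₁ y ⬝ᵥ N₁ y = r) (hN₁φ : N₁ x ⬝ᵥ φ x = 0)
    (hnormal : ∀ y v, N₁ y ⬝ᵥ fderiv ℝ φ y v + N₂ y ⬝ᵥ fderiv ℝ ψ y v = 0)
    (hW₁ : ∀ v, fderiv ℝ N₁ x v + (N₁ x ⬝ᵥ fderiv ℝ φ x v) • φ x = -fderiv ℝ φ x (A v))
    (hW₂ : ∀ v, fderiv ℝ N₂ x v + (N₂ x ⬝ᵥ fderiv ℝ ψ x v) • ψ x = -fderiv ℝ ψ x (A v))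
    (hξ₁ : fderiv ℝ φ x ξ = a • N₁ x) (hξ₂ : fderiv ℝ ψ x ξ = b • N₂ x) :
    fderiv ℝ φ x (A ξ) = 0 ∧ fderiv ℝ ψ x (A ξ) = 0 := by
  have hφt : ∀ v, φ x ⬝ᵥ fderiv ℝ φ x v = 0 :=
    dotProduct_fderiv_eq_zero_of_dotProduct_self_eq (hφ.differentiableAt two_ne_zero) hφ1
  have hψt : ∀ v, ψ x ⬝ᵥ fderiv ℝ ψ x v = 0 :=
    dotProduct_fderiv_eq_zero_of_dotProduct_self_eq (hψ.differentiableAt two_ne_zero) hψ1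
  have hN₁A : ∀ v, fderiv ℝ φ x (A v) ⬝ᵥ N₁ x = 0 := fun v => by
    have h := dotProduct_eq_neg_of_add_smul_eq_neg (hW₁ v) (by rwa [dotProduct_comm])
    rw [dotProduct_comm, dotProduct_fderiv_eq_zero_of_dotProduct_self_eq hN₁ hN₁r] at h
    linarith
  have hN₂A : ∀ v, fderiv ℝ ψ x (A v) ⬝ᵥ N₂ x = 0 := fun v => by
    rw [dotProduct_comm]
    linarith [hnormal x (A v), dotProduct_comm (fderiv ℝ φ x (A v)) (N₁ x) ▸ hN₁A v]
  have hsymm := fderiv_dotProduct_fderiv_add_comm hN₁ hN₂ hφ hψ hnormal ξ (A ξ)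
  rw [dotProduct_eq_neg_of_add_smul_eq_neg (hW₁ ξ) (hφt _),
    dotProduct_eq_neg_of_add_smul_eq_neg (hW₂ ξ) (hψt _),
    dotProduct_eq_neg_of_add_smul_eq_neg (hW₁ (A ξ)) (hφt _),
    dotProduct_eq_neg_of_add_smul_eq_neg (hW₂ (A ξ)) (hψt _), hξ₁, hξ₂,
    dotProduct_smul, dotProduct_smul, hN₁A, hN₂A, smul_zero, smul_zero, neg_zero] at hsymm
  have h₁ : 0 ≤ fderiv ℝ φ x (A ξ) ⬝ᵥ fderiv ℝ φ x (A ξ) :=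
    Finset.sum_nonneg fun i _ => mul_self_nonneg _
  have h₂ : 0 ≤ fderiv ℝ ψ x (A ξ) ⬝ᵥ fderiv ℝ ψ x (A ξ) :=
    Finset.sum_nonneg fun i _ => mul_self_nonneg _
  exact ⟨dotProduct_self_eq_zero.mp (by linarith), dotProduct_self_eq_zero.mp (by linarith)⟩

end Hypersurface

theorem inv_smul_two_smul_crossProduct_dotProduct_self {p n : Fin 3 → ℝ} {s : ℝ}
    (hp : p ⬝ᵥ p = 1) (hpn : p ⬝ᵥ n = 0) (hs : s ^ 2 = 4 * (n ⬝ᵥ n)) (hs0 : s ≠ 0) :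
    (s⁻¹ • (2 : ℝ) • crossProduct p n) ⬝ᵥ (s⁻¹ • (2 : ℝ) • crossProduct p n) = 1 := by
  simp only [smul_dotProduct, dotProduct_smul, cross_dot_cross, hp, hpn, smul_eq_mul]
  field_simp
  linarith

theorem productStructure_frame_eq_diag (x : V3) (hc₀ : c₀ ∈ Set.Ioo (-1 : ℝ) 1)
    (hφx : φ x ⬝ᵥ φ x = 1) (hψx : ψ x ⬝ᵥ ψ x = 1)
    (hN1x : N1 x ⬝ᵥ N1 x = (1 + c₀) / 2) (hN2x : N2 x ⬝ᵥ N2 x = (1 - c₀) / 2)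
    (hN1φ : N1 x ⬝ᵥ φ x = 0) (hN2ψ : N2 x ⬝ᵥ ψ x = 0) :
    E1a c₀ N1 x ⬝ᵥ E1a c₀ N1 x - E1b c₀ N2 x ⬝ᵥ E1b c₀ N2 x = -c₀ ∧
      E2a c₀ φ N1 x ⬝ᵥ E2a c₀ φ N1 x - (0 : V3) ⬝ᵥ (0 : V3) = 1 ∧
      (0 : V3) ⬝ᵥ (0 : V3) - E3b c₀ ψ N2 x ⬝ᵥ E3b c₀ ψ N2 x = -1 ∧
      E1a c₀ N1 x ⬝ᵥ E2a c₀ φ N1 x - E1b c₀ N2 x ⬝ᵥ (0 : V3) = 0 ∧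
      E1a c₀ N1 x ⬝ᵥ (0 : V3) - E1b c₀ N2 x ⬝ᵥ E3b c₀ ψ N2 x = 0 ∧
      E2a c₀ φ N1 x ⬝ᵥ (0 : V3) - (0 : V3) ⬝ᵥ E3b c₀ ψ N2 x = 0 := by
  obtain ⟨hm1, hp1⟩ := hc₀
  have hsqrt : ∀ t : ℝ, 0 < t → Real.sqrt t ^ 2 = t ∧ Real.sqrt t ≠ 0 := fun t ht =>
    ⟨Real.sq_sqrt ht.le, (Real.sqrt_pos.mpr ht).ne'⟩
  obtain ⟨hs1, hs1'⟩ := hsqrt (1 - c₀ ^ 2) (by nlinarith)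
  obtain ⟨hs2, hs2'⟩ := hsqrt (2 * (1 + c₀)) (by linarith)
  obtain ⟨hs3, hs3'⟩ := hsqrt (2 * (1 - c₀)) (by linarith)
  refine ⟨?_, ?_, ?_, ?_, ?_, by simp⟩
  · simp only [E1a, E1b, smul_dotProduct, dotProduct_smul, neg_dotProduct, dotProduct_neg,
      smul_eq_mul, hN1x, hN2x]
    field_simp
    nlinarith
  · rw [dotProduct_zero, sub_zero]
    exact inv_smul_two_smul_crossProduct_dotProduct_self hφx
      (by rwa [dotProduct_comm]) (by rw [hs2, hN1x]; ring) hs2'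
  · rw [zero_dotProduct, zero_sub, neg_inj]
    exact inv_smul_two_smul_crossProduct_dotProduct_self hψx
      (by rwa [dotProduct_comm]) (by rw [hs3, hN2x]; ring) hs3'
  · simp [E1a, E2a, dot_cross_self]
  · simp [E1b, E3b, dot_cross_self]

/-- For an orientable hypersurface `Φ = (φ,ψ) : M → S²×S²` with
`C = ⟨PN,N⟩` constantly equal to `c₀ ∈ (-1,1)`, one has `AX = 0` (so `0` is a principal
curvature everywhere), and in the orthonormal frame `E₁ = X/√(1-c₀²)`,
`E₂ = (J₁N+J₂N)/√(2(1+c₀))`, `E₃ = (J₁N-J₂N)/√(2(1-c₀))` the tangential product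
structure is `Pᵀ = diag(-c₀, 1, -1)`. -/
theorem stmt_14
    (X : V3 → V3) (A : V3 → V3 →ₗ[ℝ] V3)
    (hc₀ : c₀ ∈ Set.Ioo (-1 : ℝ) 1)
    (hφ : ContDiff ℝ 2 φ) (hψ : ContDiff ℝ 2 ψ)
    (hN1 : ContDiff ℝ 2 N1) (hN2 : ContDiff ℝ 2 N2)
    (hsph1 : ∀ x, φ x ⬝ᵥ φ x = 1) (hsph2 : ∀ x, ψ x ⬝ᵥ ψ x = 1)
    (hNunit : ∀ x, N1 x ⬝ᵥ N1 x + N2 x ⬝ᵥ N2 x = 1)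
    (hNtan1 : ∀ x, N1 x ⬝ᵥ φ x = 0) (hNtan2 : ∀ x, N2 x ⬝ᵥ ψ x = 0)
    (hNnorm : ∀ x v, N1 x ⬝ᵥ Dv φ x v + N2 x ⬝ᵥ Dv ψ x v = 0)
    (hW1 : ∀ x v, fderiv ℝ N1 x v + (N1 x ⬝ᵥ Dv φ x v) • φ x = -(Dv φ x (A x v)))
    (hW2 : ∀ x v, fderiv ℝ N2 x v + (N2 x ⬝ᵥ Dv ψ x v) • ψ x = -(Dv ψ x (A x v)))
    -- C ≡ c₀:
    (hC : ∀ x, N1 x ⬝ᵥ N1 x - N2 x ⬝ᵥ N2 x = c₀)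
    -- X is the tangent part of PN: dΦ(X) = ((1-c₀)N₁, -(1+c₀)N₂):
    (hX1 : ∀ x, Dv φ x (X x) = (1 - c₀) • N1 x)
    (hX2 : ∀ x, Dv ψ x (X x) = -((1 + c₀) • N2 x)) :
    -- AX = 0:
    (∀ x, Dv φ x (A x (X x)) = 0 ∧ Dv ψ x (A x (X x)) = 0) ∧
    -- Pᵀ = diag(-c₀, 1, -1) in the frame {E₁,E₂,E₃} (⟨PE_i,E_j⟩ entries):
    (∀ x,
      E1a c₀ N1 x ⬝ᵥ E1a c₀ N1 x - E1b c₀ N2 x ⬝ᵥ E1b c₀ N2 x = -c₀ ∧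
      E2a c₀ φ N1 x ⬝ᵥ E2a c₀ φ N1 x - (0 : V3) ⬝ᵥ (0 : V3) = 1 ∧
      (0 : V3) ⬝ᵥ (0 : V3) - E3b c₀ ψ N2 x ⬝ᵥ E3b c₀ ψ N2 x = -1 ∧
      E1a c₀ N1 x ⬝ᵥ E2a c₀ φ N1 x - E1b c₀ N2 x ⬝ᵥ (0 : V3) = 0 ∧
      E1a c₀ N1 x ⬝ᵥ (0 : V3) - E1b c₀ N2 x ⬝ᵥ E3b c₀ ψ N2 x = 0 ∧
      E2a c₀ φ N1 x ⬝ᵥ (0 : V3) - (0 : V3) ⬝ᵥ E3b c₀ ψ N2 x = 0) := by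
  have hN1sq : ∀ x, N1 x ⬝ᵥ N1 x = (1 + c₀) / 2 := fun x => by linarith [hNunit x, hC x]
  have hN2sq : ∀ x, N2 x ⬝ᵥ N2 x = (1 - c₀) / 2 := fun x => by linarith [hNunit x, hC x]
  refine ⟨fun x => ?_, fun x => productStructure_frame_eq_diag c₀ φ ψ N1 N2 x hc₀
    (hsph1 x) (hsph2 x) (hN1sq x) (hN2sq x) (hNtan1 x) (hNtan2 x)⟩
  have hX2' : Dv ψ x (X x) = (-(1 + c₀)) • N2 x := by rw [neg_smul]; exact hX2 x
  exact fderiv_apply_shapeOperator_eq_zero (A x) hφ.contDiffAt hψ.contDiffAt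
    ((hN1.differentiable two_ne_zero) x) ((hN2.differentiable two_ne_zero) x) hsph1 hsph2
    hN1sq (hNtan1 x) hNnorm (hW1 x) (hW2 x) (hX1 x) hX2'

end
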